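/- Let Ω be a nonempty compact subset of ℝ^n (n ≥ 2). Then the minimal unfolded region of Ω is included in the convex hull of Ω: Uf(Ω) ⊆ conv(Ω). -/

import Mathlib

open scoped RealInnerProductSpace

/-- Reflection in the hyperplane `{x : x·v = b}` (for a unit vector `v`). -/
noncomputable def reflHyp {n : ℕ} (v : EuclideanSpace ℝ (Fin n)) (b : ℝ)
    (x : EuclideanSpace ℝ (Fin n)) : EuclideanSpace ℝ (Fin n) :=
  x - (2 * (⟪x, v⟫ - b)) • v

/-- The open cap of `X` above the hyperplane `{x : x·v = b}`. -/
def cap {n : ℕ} (X : Set (EuclideanSpace ℝ (Fin n))) (v : EuclideanSpace ℝ (Fin n)) (b : ℝ) :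
    Set (EuclideanSpace ℝ (Fin n)) :=
  X ∩ {x | b < ⟪x, v⟫}

/-- The level of the maximal cap of `X` in direction `v`. -/
noncomputable def level {n : ℕ} (X : Set (EuclideanSpace ℝ (Fin n)))
    (v : EuclideanSpace ℝ (Fin n)) : ℝ :=
  sInf {a : ℝ | ∀ b : ℝ, a ≤ b → reflHyp v b '' cap X v b ⊆ X}

/-- The minimal unfolded region (heart) of `X`. -/
noncomputable def Uf {n : ℕ} (X : Set (EuclideanSpace ℝ (Fin n))) :
    Set (EuclideanSpace ℝ (Fin n)) :=
  ⋂ v ∈ {v : EuclideanSpace ℝ (Fin n) | ‖v‖ = 1}, {x | ⟪x, v⟫ ≤ level X v}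

/-- The δ-parallel body of `Ω`: the union of closed δ-balls centered in `Ω`. -/
def parallelBody {n : ℕ} (Ω : Set (EuclideanSpace ℝ (Fin n))) (δ : ℝ) :
    Set (EuclideanSpace ℝ (Fin n)) :=
  ⋃ x ∈ Ω, Metric.closedBall x δ

/-!
If `p ∉ conv Ω`, a hyperplane `{x · v = c}` strictly separates `p` from `conv Ω` (which is closed,
being compact by Carathéodory). Above level `c` the cap of `Ω` is empty, so every reflection
condition holds trivially and `l_Ω(v) ≤ c < p · v`, i.e. `p ∉ Uf Ω`.
-/

open Module Set

section ConvexHullCompact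

variable {E : Type*} [NormedAddCommGroup E] [NormedSpace ℝ E]

def convexCombinations (s : Set E) (k : ℕ) : Set E :=
  (fun q : (Fin k → ℝ) × (Fin k → E) => ∑ i, q.1 i • q.2 i) ''
    (stdSimplex ℝ (Fin k) ×ˢ univ.pi fun _ => s)

lemma convexCombinations_subset_convexHull (s : Set E) (k : ℕ) :
    convexCombinations s k ⊆ convexHull ℝ s := by
  rintro x ⟨⟨w, z⟩, ⟨⟨hw₀, hw₁⟩, hz⟩, rfl⟩
  exact mem_convexHull_of_exists_fintype w z hw₀ hw₁ (fun i => hz i (mem_univ i)) rfl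

lemma isCompact_convexCombinations {s : Set E} (hs : IsCompact s) (k : ℕ) :
    IsCompact (convexCombinations s k) :=
  ((isCompact_stdSimplex ℝ (Fin k)).prod (isCompact_univ_pi fun _ => hs)).image <|
    continuous_finsetSum _ fun i _ =>
      ((continuous_apply i).comp continuous_fst).smul ((continuous_apply i).comp continuous_snd)

variable [FiniteDimensional ℝ E]

/-- Carathéodory: `finrank ℝ E + 1` points suffice. -/
lemma convexHull_subset_iUnion_convexCombinations (s : Set E) :
    convexHull ℝ s ⊆ ⋃ k ∈ Iic (finrank ℝ E + 1), convexCombinations s k := by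
  intro x hx
  obtain ⟨ι, _, z, w, hzs, hz, hw₀, hw₁, rfl⟩ := eq_pos_convex_span_of_mem_convexHull hx
  have hcard : Fintype.card ι ≤ finrank ℝ E + 1 :=
    hz.card_le_finrank_succ.trans (Nat.succ_le_succ (Submodule.finrank_le _))
  let e := Fintype.equivFin ι
  refine mem_biUnion hcard ⟨(w ∘ e.symm, z ∘ e.symm), ⟨⟨fun i => (hw₀ _).le, ?_⟩,
    fun i _ => hzs (mem_range_self _)⟩, ?_⟩
  · simpa only [Function.comp_apply, e.symm.sum_comp] using hw₁
  · simp only [Function.comp_apply, e.symm.sum_comp (fun i => w i • z i)]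

theorem IsCompact.convexHull {s : Set E} (hs : IsCompact s) : IsCompact (convexHull ℝ s) := by
  have hunion : _root_.convexHull ℝ s = ⋃ k ∈ Iic (finrank ℝ E + 1), convexCombinations s k :=
    (convexHull_subset_iUnion_convexCombinations s).antisymm
      (iUnion₂_subset fun k _ => convexCombinations_subset_convexHull s k)
  rw [hunion]
  exact (finite_Iic _).isCompact_biUnion fun k _ => isCompact_convexCombinations hs k

end ConvexHullCompact

lemma exists_unit_inner_lt_of_notMem {E : Type*} [NormedAddCommGroup E] [InnerProductSpace ℝ E]
    [CompleteSpace E] {K : Set E} (hconv : Convex ℝ K) (hclosed : IsClosed K) (hne : K.Nonempty)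
    {p : E} (hp : p ∉ K) : ∃ v : E, ‖v‖ = 1 ∧ ∃ c, (∀ x ∈ K, ⟪x, v⟫ < c) ∧ c < ⟪p, v⟫ := by
  obtain ⟨f, u, hfK, hfp⟩ := geometric_hahn_banach_closed_point hconv hclosed hp
  set w := (InnerProductSpace.toDual ℝ E).symm f
  have hfw : ∀ x, f x = ⟪x, w⟫ := fun x => by
    rw [real_inner_comm, InnerProductSpace.toDual_symm_apply]
  obtain ⟨x₀, hx₀⟩ := hne
  have hw : 0 < ‖w‖ := norm_pos_iff.mpr fun h => by
    have := hfK x₀ hx₀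
    simp only [hfw, h, inner_zero_right] at this hfp
    linarith
  refine ⟨‖w‖⁻¹ • w, by rw [norm_smul, norm_inv, norm_norm, inv_mul_cancel₀ hw.ne'],
    ‖w‖⁻¹ * u, fun x hx => ?_, ?_⟩
  · rw [real_inner_smul_right, ← hfw]
    exact mul_lt_mul_of_pos_left (hfK x hx) (inv_pos.mpr hw)
  · rw [real_inner_smul_right, ← hfw]
    exact mul_lt_mul_of_pos_left hfp (inv_pos.mpr hw)

section Level

variable {n : ℕ} {v : EuclideanSpace ℝ (Fin n)}

lemma inner_reflHyp (hv : ‖v‖ = 1) (b : ℝ) (x : EuclideanSpace ℝ (Fin n)) :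
    ⟪reflHyp v b x, v⟫ = 2 * b - ⟪x, v⟫ := by
  rw [reflHyp, inner_sub_left, real_inner_smul_left, real_inner_self_eq_norm_sq, hv]
  ring

lemma level_le_of_forall_inner_le (hv : ‖v‖ = 1) {X : Set (EuclideanSpace ℝ (Fin n))}
    (hne : X.Nonempty) (hbdd : BddBelow ((⟪·, v⟫) '' X)) {c : ℝ} (hc : ∀ x ∈ X, ⟪x, v⟫ ≤ c) :
    level X v ≤ c := by
  obtain ⟨m, hm⟩ := hbdd
  have hm : ∀ x ∈ X, m ≤ ⟪x, v⟫ := fun x hx => hm (mem_image_of_mem _ hx)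
  obtain ⟨x₀, hx₀⟩ := hne
  -- an admissible level `a < x₀ · v` reflects `x₀` to height `2a - x₀ · v ≥ m`
  refine csInf_le ⟨m, fun a ha => ?_⟩ fun b hcb => ?_
  · by_cases hax : a < ⟪x₀, v⟫
    · have := hm _ (ha a le_rfl ⟨x₀, ⟨hx₀, hax⟩, rfl⟩)
      rw [inner_reflHyp hv] at this
      linarith [hm x₀ hx₀]
    · linarith [hm x₀ hx₀]
  · rintro _ ⟨x, ⟨hx, hbx⟩, rfl⟩
    exact absurd (hc x hx) (not_le.mpr (hcb.trans_lt hbx))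

end Level

theorem stmt10_general {n : ℕ} (Ω : Set (EuclideanSpace ℝ (Fin n)))
    (hΩne : Ω.Nonempty) (hΩ : IsCompact Ω) :
    Uf Ω ⊆ convexHull ℝ Ω := by
  intro p hp
  by_contra hpΩ
  obtain ⟨v, hv, c, hlt, hcp⟩ := exists_unit_inner_lt_of_notMem (convex_convexHull ℝ Ω)
    hΩ.convexHull.isClosed hΩne.convexHull hpΩ
  have hlevel : level Ω v ≤ c :=
    level_le_of_forall_inner_le hv hΩne (hΩ.image (continuous_id.inner continuous_const)).bddBelow
      fun x hx => (hlt x (subset_convexHull ℝ Ω hx)).le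
  have hp_le : ⟪p, v⟫ ≤ level Ω v := mem_iInter₂.mp hp v hv
  linarith

theorem stmt10 {n : ℕ} (hn : 2 ≤ n) (Ω : Set (EuclideanSpace ℝ (Fin n)))
    (hΩne : Ω.Nonempty) (hΩ : IsCompact Ω) :
    Uf Ω ⊆ convexHull ℝ Ω :=
  stmt10_general Ω hΩne hΩ
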